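/- (Key identity (3.15) in the proof of Lemma 3.4.) Suppose d^k, d^{k+1}, z^k, z^{k+1}, x^k, d*, z*, x* ∈ ℝ^{n×p} satisfy: d^{k+1} = d^k + c(I − W)(2x^k − z^k − Λ∇s(x^k) − Λ d^k); z^{k+1} = x^k − Λ∇s(x^k) − Λ d^{k+1}; d^k, d* ∈ range(I − W); (I − W)x* = 0; and z* = x* − Λ∇s(x*) − Λ d*. Then ⟨d^{k+1} − d*, z^{k+1} − z^k + x^k − x*⟩ = ⟨d^{k+1} − d*, d^{k+1} − d^k⟩_M, where M = c⁻¹(I − W)† − Λ. -/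

import Mathlib

open Matrix Filter Topology

noncomputable section

/-- Trace inner product `⟨x, y⟩ = tr(xᵀ y)` on `n × p` real matrices. -/
def iprod {n p : ℕ} (x y : Matrix (Fin n) (Fin p) ℝ) : ℝ := (xᵀ * y).trace

/-- Weighted inner product `⟨x, y⟩_Q = tr(xᵀ Q y)`. -/
def iprodQ {n p : ℕ} (Q : Matrix (Fin n) (Fin n) ℝ) (x y : Matrix (Fin n) (Fin p) ℝ) : ℝ :=
  (xᵀ * Q * y).trace

/-- Weighted squared (semi)norm `‖x‖_Q² = tr(xᵀ Q x)`. -/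
def nsq {n p : ℕ} (Q : Matrix (Fin n) (Fin n) ℝ) (x : Matrix (Fin n) (Fin p) ℝ) : ℝ :=
  iprodQ Q x x

/-- `∇s(x)`: the matrix whose `i`-th row is the gradient field `g i` applied to the `i`-th
row of `x`. -/
def gradS {n p : ℕ} (g : Fin n → EuclideanSpace ℝ (Fin p) → EuclideanSpace ℝ (Fin p))
    (x : Matrix (Fin n) (Fin p) ℝ) : Matrix (Fin n) (Fin p) ℝ :=
  Matrix.of fun i => WithLp.equiv 2 (Fin p → ℝ) (g i ((WithLp.equiv 2 (Fin p → ℝ)).symm (x i)))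

/-- `x ∈ range(A)`, i.e. `x = A y` for some `y ∈ ℝ^{n×p}`. -/
def InRange {n p : ℕ} (A : Matrix (Fin n) (Fin n) ℝ) (x : Matrix (Fin n) (Fin p) ℝ) : Prop :=
  ∃ y : Matrix (Fin n) (Fin p) ℝ, x = A * y

/-- `B` is the Moore–Penrose pseudoinverse of `A`. -/
def IsMoorePenrose {n : ℕ} (A B : Matrix (Fin n) (Fin n) ℝ) : Prop :=
  A * B * A = A ∧ B * A * B = B ∧ (A * B)ᵀ = A * B ∧ (B * A)ᵀ = B * A

/-- `r(x) = Σᵢ rᵢ(xᵢ)` where `xᵢ` is the `i`-th row of `x`. -/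
def rsum {n p : ℕ} (r : Fin n → (Fin p → ℝ) → ℝ) (x : Matrix (Fin n) (Fin p) ℝ) : ℝ :=
  ∑ i, r i (x i)

/-- `q ∈ ∂r(x)`: subgradient of `rsum r` at `x` w.r.t. the trace inner product. -/
def IsSubgrad {n p : ℕ} (r : Fin n → (Fin p → ℝ) → ℝ) (x q : Matrix (Fin n) (Fin p) ℝ) : Prop :=
  ∀ y : Matrix (Fin n) (Fin p) ℝ, rsum r x + iprod q (y - x) ≤ rsum r y

/-- `t` is an eigenvalue of the real matrix `A`. -/
def IsEig {n : ℕ} (A : Matrix (Fin n) (Fin n) ℝ) (t : ℝ) : Prop :=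
  ∃ v : Fin n → ℝ, v ≠ 0 ∧ A *ᵥ v = t • v

/-- The mixing matrix assumption: symmetry, null space of `I - W` is the span of the
all-ones vector, and `2I ≽ W + I ≻ 0`. -/
def IsMixing {n : ℕ} (W : Matrix (Fin n) (Fin n) ℝ) : Prop :=
  Wᵀ = W ∧ (∀ v : Fin n → ℝ, (1 - W) *ᵥ v = 0 ↔ ∃ t : ℝ, v = fun _ => t) ∧
    (W + 1).PosDef ∧ ((2 : ℝ) • (1 : Matrix (Fin n) (Fin n) ℝ) - (W + 1)).PosSemidef

/-- `x` is a minimizer over `ℝ^{n×p}` of `u ↦ r(u) + ½‖u − z‖²_{Λ⁻¹}` where `Λ = diag α`. -/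
def ProxMin {n p : ℕ} (r : Fin n → (Fin p → ℝ) → ℝ) (α : Fin n → ℝ)
    (z x : Matrix (Fin n) (Fin p) ℝ) : Prop :=
  ∀ u : Matrix (Fin n) (Fin p) ℝ,
    rsum r x + 1 / 2 * nsq (Matrix.diagonal fun i => (α i)⁻¹) (x - z) ≤
      rsum r u + 1 / 2 * nsq (Matrix.diagonal fun i => (α i)⁻¹) (u - z)

/-- `(d, z)` is a fixed point of the NIDS iteration. -/
def NIDSFixed {n p : ℕ} (W : Matrix (Fin n) (Fin n) ℝ) (α : Fin n → ℝ) (c : ℝ)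
    (g : Fin n → EuclideanSpace ℝ (Fin p) → EuclideanSpace ℝ (Fin p))
    (r : Fin n → (Fin p → ℝ) → ℝ) (d z : Matrix (Fin n) (Fin p) ℝ) : Prop :=
  ∃ x : Matrix (Fin n) (Fin p) ℝ, ProxMin r α z x ∧
    d = d + c • ((1 - W) *
      ((2 : ℝ) • x - z - Matrix.diagonal α * gradS g x - Matrix.diagonal α * d)) ∧
    z = x - Matrix.diagonal α * gradS g x - Matrix.diagonal α * d

end

/-!
`d^{k+1} − d*` lies in `range(I − W)`, which for symmetric `W` is orthogonal to `ker(I − W)`.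
So it suffices to see that the two right-hand arguments agree after multiplication by `I − W`.
Both become `c⁻¹(d^{k+1} − d^k) − (I − W)Λ(d^{k+1} − d^k)`: on the left because
`(I − W)x* = 0` and `z^{k+1} − z^k + x^k` is the bracket of the `d`-update minus `Λ(d^{k+1} − d^k)`,
on the right because `(I − W)B` is the identity on the increment `d^{k+1} − d^k ∈ range(I − W)`.
-/

section RangeAndPseudoinverse

variable {n p : ℕ}

theorem iprodQ_eq_iprod_mul (Q : Matrix (Fin n) (Fin n) ℝ) (x y : Matrix (Fin n) (Fin p) ℝ) :
    iprodQ Q x y = iprod x (Q * y) := by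
  rw [iprodQ, iprod, Matrix.mul_assoc]

theorem inRange_mul (A : Matrix (Fin n) (Fin n) ℝ) (y : Matrix (Fin n) (Fin p) ℝ) :
    InRange A (A * y) :=
  ⟨y, rfl⟩

theorem InRange.add {A : Matrix (Fin n) (Fin n) ℝ} {x y : Matrix (Fin n) (Fin p) ℝ}
    (hx : InRange A x) (hy : InRange A y) : InRange A (x + y) := by
  obtain ⟨u, rfl⟩ := hx
  obtain ⟨v, rfl⟩ := hy
  exact ⟨u + v, (Matrix.mul_add A u v).symm⟩

theorem InRange.sub {A : Matrix (Fin n) (Fin n) ℝ} {x y : Matrix (Fin n) (Fin p) ℝ}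
    (hx : InRange A x) (hy : InRange A y) : InRange A (x - y) := by
  obtain ⟨u, rfl⟩ := hx
  obtain ⟨v, rfl⟩ := hy
  exact ⟨u - v, (Matrix.mul_sub A u v).symm⟩

theorem InRange.iprod_congr {A : Matrix (Fin n) (Fin n) ℝ} (hA : Aᵀ = A)
    {u x y : Matrix (Fin n) (Fin p) ℝ} (hu : InRange A u) (h : A * x = A * y) :
    iprod u x = iprod u y := by
  obtain ⟨v, rfl⟩ := hu
  simp only [iprod, transpose_mul, hA, Matrix.mul_assoc, h]

theorem IsMoorePenrose.mul_mul_of_inRange {A B : Matrix (Fin n) (Fin n) ℝ}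
    (hB : IsMoorePenrose A B) {x : Matrix (Fin n) (Fin p) ℝ} (hx : InRange A x) :
    A * (B * x) = x := by
  obtain ⟨y, rfl⟩ := hx
  rw [← Matrix.mul_assoc, ← Matrix.mul_assoc, hB.1]

end RangeAndPseudoinverse

theorem nids_key_identity_general
    {n p : ℕ}
    (W : Matrix (Fin n) (Fin n) ℝ) (hW : IsMixing W)
    (α : Fin n → ℝ) (c : ℝ) (hc : 0 < c)
    (B : Matrix (Fin n) (Fin n) ℝ) (hB : IsMoorePenrose (1 - W) B)
    (g : Fin n → EuclideanSpace ℝ (Fin p) → EuclideanSpace ℝ (Fin p))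
    (dk dk1 zk zk1 xk dstar xstar : Matrix (Fin n) (Fin p) ℝ)
    (hdu : dk1 = dk + c • ((1 - W) *
      ((2 : ℝ) • xk - zk - Matrix.diagonal α * gradS g xk - Matrix.diagonal α * dk)))
    (hzu : zk1 = xk - Matrix.diagonal α * gradS g xk - Matrix.diagonal α * dk1)
    (hdk : InRange (1 - W) dk) (hdstar : InRange (1 - W) dstar)
    (hxs : (1 - W) * xstar = 0) :
    iprod (dk1 - dstar) (zk1 - zk + xk - xstar) =
      iprodQ (c⁻¹ • B - Matrix.diagonal α) (dk1 - dstar) (dk1 - dk) := by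
  set A := 1 - W
  set Λ := Matrix.diagonal α
  set V := (2 : ℝ) • xk - zk - Λ * gradS g xk - Λ * dk
  have hAT : Aᵀ = A := by rw [transpose_sub, transpose_one, hW.1]
  have hstep : dk1 - dk = A * (c • V) := by rw [hdu, Matrix.mul_smul]; abel
  have hz : zk1 - zk + xk = V - Λ * (dk1 - dk) := by
    rw [hzu, Matrix.mul_sub]; simp only [V, two_smul]; abel
  clear_value A Λ V
  have hAV : A * V = c⁻¹ • (dk1 - dk) := by
    rw [hstep, Matrix.mul_smul, smul_smul, inv_mul_cancel₀ hc.ne', one_smul]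
  have hdk1 : InRange A dk1 := by
    rw [hdu, ← Matrix.mul_smul]; exact hdk.add (inRange_mul A _)
  rw [iprodQ_eq_iprod_mul]
  refine (hdk1.sub hdstar).iprod_congr hAT ?_
  calc A * (zk1 - zk + xk - xstar) = c⁻¹ • (dk1 - dk) - A * (Λ * (dk1 - dk)) := by
        rw [Matrix.mul_sub A, hxs, sub_zero, hz, Matrix.mul_sub A, hAV]
    _ = A * ((c⁻¹ • B - Λ) * (dk1 - dk)) := by
        rw [Matrix.sub_mul, Matrix.mul_sub A, Matrix.smul_mul, Matrix.mul_smul,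
          hB.mul_mul_of_inRange ⟨_, hstep⟩]

/-- Key identity (3.15) in the proof of Lemma 3.4. -/
theorem nids_key_identity
    {n p : ℕ}
    (W : Matrix (Fin n) (Fin n) ℝ) (hW : IsMixing W)
    (α : Fin n → ℝ) (hα : ∀ i, 0 < α i) (c : ℝ) (hc : 0 < c)
    (B : Matrix (Fin n) (Fin n) ℝ) (hB : IsMoorePenrose (1 - W) B)
    (s : Fin n → EuclideanSpace ℝ (Fin p) → ℝ)
    (g : Fin n → EuclideanSpace ℝ (Fin p) → EuclideanSpace ℝ (Fin p))
    (hg : ∀ i v, HasGradientAt (s i) (g i v) v)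
    (dk dk1 zk zk1 xk dstar zstar xstar : Matrix (Fin n) (Fin p) ℝ)
    (hdu : dk1 = dk + c • ((1 - W) *
      ((2 : ℝ) • xk - zk - Matrix.diagonal α * gradS g xk - Matrix.diagonal α * dk)))
    (hzu : zk1 = xk - Matrix.diagonal α * gradS g xk - Matrix.diagonal α * dk1)
    (hdk : InRange (1 - W) dk) (hdstar : InRange (1 - W) dstar)
    (hxs : (1 - W) * xstar = 0)
    (hzs : zstar = xstar - Matrix.diagonal α * gradS g xstar - Matrix.diagonal α * dstar) :
    iprod (dk1 - dstar) (zk1 - zk + xk - xstar) =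
      iprodQ (c⁻¹ • B - Matrix.diagonal α) (dk1 - dstar) (dk1 - dk) :=
  nids_key_identity_general W hW α c hc B hB g dk dk1 zk zk1 xk dstar xstar hdu hzu hdk hdstar hxs
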